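/- Let Γ be a countably infinite group with a finite symmetric generating set S and Cayley graph 𝒢. Suppose Γ acts properly on a space with walls: there are a set X with a Γ-action and a family 𝓗 of subsets of X with g·B ∈ 𝓗 for all g ∈ Γ and B ∈ 𝓗, such that for all x,y ∈ X the number w(x,y) := |{B ∈ 𝓗 : exactly one of x, y lies in B}| is finite, and for some x₀ ∈ X and every N ∈ ℕ the set {g ∈ Γ : w(x₀, g·x₀) ≤ N} is finite. Then for every α < 1 there exists a Γ-invariant bond percolation P on 𝒢 such that E[deg_ω(o)] > α·deg(o) and the two-point function τ(o,·) vanishes at infinity. -/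

import Mathlib

open MeasureTheory Filter
open scoped ComplexOrder symmDiff

namespace InvPerc

variable {Γ : Type*} [Group Γ]

/-- Percolation configurations: indicator functions on unordered pairs of vertices. -/
abbrev Config (Γ : Type*) := Sym2 Γ → Bool

/-- The edge set of the (right) Cayley graph of `Γ` with respect to `S`. -/
def IsCayleyEdge (S : Finset Γ) (e : Sym2 Γ) : Prop :=
  ∃ g : Γ, ∃ t ∈ S, e = s(g, g * t)

/-- The action of `Γ` on configurations induced by left multiplication:
`e ∈ shift γ ω ↔ γ⁻¹ • e ∈ ω`. -/
def shift (γ : Γ) (ω : Config Γ) : Config Γ :=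
  fun e => ω (Sym2.map (fun x => γ⁻¹ * x) e)

/-- `ConnBy ω u v n` : `u` and `v` are joined by a path of at most `n` open edges of `ω`. -/
def ConnBy (ω : Config Γ) (u v : Γ) (n : ℕ) : Prop :=
  ∃ l : List Γ, l.length ≤ n ∧ List.Chain (fun a b => ω s(a, b) = true) u l ∧
    (u :: l).getLast (List.cons_ne_nil u l) = v

/-- `u` and `v` lie in the same cluster of the configuration `ω` (`u ↔ v` in `ω`). -/
def Conn (ω : Config Γ) (u v : Γ) : Prop := ∃ n : ℕ, ConnBy ω u v n

/-- The two-point function `τ(u,v) = P[u ↔ v]`. -/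
noncomputable def tpf (P : Measure (Config Γ)) (u v : Γ) : ℝ :=
  (P {ω | Conn ω u v}).toReal

/-- A `Γ`-invariant bond percolation on the Cayley graph of `(Γ, S)`: a probability
measure on configurations, supported on subsets of the Cayley edge set, invariant under
the action induced by left multiplication. -/
structure IsInvBondPerc (S : Finset Γ) (P : Measure (Config Γ)) : Prop where
  prob : IsProbabilityMeasure P
  supported : P {ω | ∀ e : Sym2 Γ, ω e = true → IsCayleyEdge S e} = 1
  invariant : ∀ γ : Γ, P.map (shift γ) = P

/-- The expected degree of the origin, `E[deg_ω(o)] = ∑_{t ∈ S} P[{o, t} ∈ ω]`. -/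
noncomputable def expDeg (S : Finset Γ) (P : Measure (Config Γ)) : ℝ :=
  ∑ t ∈ S, (P {ω : Config Γ | ω s(1, t) = true}).toReal

/-- The word length of `g` with respect to the generating set `S`. -/
noncomputable def wlen (S : Finset Γ) (g : Γ) : ℕ :=
  sInf {n : ℕ | ∃ l : List Γ, (∀ x ∈ l, x ∈ S) ∧ l.prod = g ∧ l.length = n}

/-- The word metric `d(g,h) = |g⁻¹h|`. -/
noncomputable def wdist (S : Finset Γ) (g h : Γ) : ℕ := wlen S (g⁻¹ * h)

/-- The two-point function of `P` vanishes at infinity: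
`sup {τ(g,h) : d(g,h) > r} → 0` as `r → ∞`. -/
def TpfVanishes (S : Finset Γ) (P : Measure (Config Γ)) : Prop :=
  ∀ ε : ℝ, 0 < ε → ∃ r : ℕ, ∀ g h : Γ, r < wdist S g h → tpf P g h < ε

/-- `S` is a finite symmetric generating set not containing the identity. -/
def IsSymmGen (S : Finset Γ) : Prop :=
  (1 : Γ) ∉ S ∧ (∀ t ∈ S, t⁻¹ ∈ S) ∧
    ∀ g : Γ, ∃ l : List Γ, (∀ x ∈ l, x ∈ S) ∧ l.prod = g

/-- A positive definite function on `Γ`. -/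
def IsPosDef (φ : Γ → ℂ) : Prop :=
  ∀ (n : ℕ) (g : Fin n → Γ) (a : Fin n → ℂ),
    0 ≤ ∑ i : Fin n, ∑ j : Fin n, (starRingEnd ℂ) (a i) * a j * φ ((g i)⁻¹ * g j)

/-- A conditionally negative definite function on `Γ`. -/
def IsCondNegDef (ψ : Γ → ℝ) : Prop :=
  ψ 1 = 0 ∧ (∀ g : Γ, ψ g⁻¹ = ψ g) ∧
    ∀ (n : ℕ) (g : Fin n → Γ) (a : Fin n → ℝ), (∑ i : Fin n, a i) = 0 →
      ∑ i : Fin n, ∑ j : Fin n, a i * a j * ψ ((g i)⁻¹ * g j) ≤ 0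

end InvPerc

open ProbabilityTheory Set
open scoped ENNReal Topology

/-!
Activate each wall independently with probability `1 - p`, and open a Cayley edge `{g, gt}`
iff no activated wall separates `g • x₀` from `gt • x₀`. Translation by `γ` permutes the walls,
which preserves the product measure, so the percolation is invariant. The edge `{o, t}` is open
with probability `p ^ w(x₀, t • x₀)`, which exceeds `α` once `p` is close to `1`. An activated
wall separating `g • x₀` from `h • x₀` is crossed by some edge of every path from `g` to `h`, so
`τ(g, h) ≤ p ^ w(g • x₀, h • x₀) = p ^ w(x₀, g⁻¹h • x₀)`, which properness makes small when
`d(g, h)` is large.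
-/

theorem Relation.ReflTransGen.eq_of_forall_rel {α β : Type*} {r : α → α → Prop} {f : α → β}
    (hf : ∀ a b, r a b → f a = f b) {u v : α} (h : Relation.ReflTransGen r u v) : f u = f v := by
  induction h with
  | refl => rfl
  | tail _ hbc ih => exact ih.trans (hf _ _ hbc)

lemma MeasureTheory.Measure.infinitePi_setOf_forall_mem_eq {ι α : Type*} [MeasurableSpace α]
    [MeasurableSingletonClass α] (ν : Measure α) [IsProbabilityMeasure ν] {s : Set ι}
    (hs : s.Finite) (a : α) :
    Measure.infinitePi (fun _ : ι => ν) {ξ | ∀ i ∈ s, ξ i = a} = ν {a} ^ s.ncard := by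
  lift s to Finset ι using hs
  have : {ξ : ι → α | ∀ i ∈ (s : Set ι), ξ i = a} = Set.pi s fun _ => {a} := by ext; simp
  rw [this, Measure.infinitePi_pi _ fun _ _ => measurableSet_singleton a]
  simp

lemma MeasureTheory.Measure.infinitePi_map_comp_equiv {ι α : Type*} [MeasurableSpace α]
    (ν : Measure α) [IsProbabilityMeasure ν] (e : ι ≃ ι) :
    (Measure.infinitePi fun _ : ι => ν).map (· ∘ e) = Measure.infinitePi fun _ : ι => ν := by
  have := Measure.infinitePi_map_piCongrLeft (fun _ : ι => ν) e.symm
  convert this using 2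
  ext ξ i
  rw [MeasurableEquiv.coe_piCongrLeft, Equiv.piCongrLeft_apply_eq_cast]
  simp

lemma exists_pos_lt_one_lt_pow {α : ℝ} (hα : α < 1) (M : ℕ) :
    ∃ p : ℝ, 0 < p ∧ p < 1 ∧ α < p ^ M := by
  have hlim : Tendsto (fun p : ℝ => p ^ M) (𝓝[<] 1) (𝓝 1) := by
    simpa using ((continuous_pow M).tendsto (1 : ℝ)).mono_left nhdsWithin_le_nhds
  obtain ⟨p, hαp, hp0, hp1⟩ :=
    ((hlim.eventually (lt_mem_nhds hα)).and (Ioo_mem_nhdsLT one_pos)).exists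
  exact ⟨p, hp0, hp1, hαp⟩

namespace InvPerc

section Walls

variable {X : Type*} (𝓗 : Set (Set X))

def sepWalls (x y : X) : Set (Set X) := {B ∈ 𝓗 | Xor (x ∈ B) (y ∈ B)}

variable {𝓗}

lemma sepWalls_comm (x y : X) : sepWalls 𝓗 x y = sepWalls 𝓗 y x := by
  simp only [sepWalls, xor_comm]

lemma mem_iff_mem_of_notMem_sepWalls {x y : X} {B : Set X} (hB : B ∈ 𝓗)
    (h : B ∉ sepWalls 𝓗 x y) : (x ∈ B ↔ y ∈ B) := by
  simpa [sepWalls, hB, xor_iff_not_iff] using h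

variable {Γ : Type*} [Group Γ] (act : Γ →* Equiv.Perm X)

lemma sepWalls_act (hinv : ∀ γ : Γ, ∀ B ∈ 𝓗, act γ '' B ∈ 𝓗) (γ : Γ) (x y : X) :
    sepWalls 𝓗 (act γ x) (act γ y) = Equiv.Set.congr (act γ) '' sepWalls 𝓗 x y := by
  have hmem : ∀ B, (act γ).symm '' B ∈ 𝓗 ↔ B ∈ 𝓗 := fun B =>
    ⟨fun h => by simpa using hinv γ _ h, fun h => by simpa using hinv γ⁻¹ B h⟩
  ext B
  rw [Equiv.image_eq_preimage_symm]
  simp [sepWalls, hmem]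

lemma ncard_sepWalls_act (hinv : ∀ γ : Γ, ∀ B ∈ 𝓗, act γ '' B ∈ 𝓗) (g h : Γ) (x : X) :
    (sepWalls 𝓗 (act g x) (act h x)).ncard = (sepWalls 𝓗 x (act (g⁻¹ * h) x)).ncard := by
  have hh : act h x = act g (act (g⁻¹ * h) x) := by simp
  rw [hh, sepWalls_act act hinv, ncard_image_of_injective _ (Equiv.injective _)]

end Walls

section Cayley

variable {Γ : Type*} [Group Γ] {S : Finset Γ}

lemma IsCayleyEdge.map_mul_left {e : Sym2 Γ} (he : IsCayleyEdge S e) (γ : Γ) :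
    IsCayleyEdge S (e.map (γ * ·)) := by
  obtain ⟨g, t, ht, rfl⟩ := he
  exact ⟨γ * g, t, ht, by simp [mul_assoc]⟩

lemma isCayleyEdge_map_mul_left_iff {e : Sym2 Γ} (γ : Γ) :
    IsCayleyEdge S (e.map (γ * ·)) ↔ IsCayleyEdge S e := by
  refine ⟨fun h => ?_, fun h => h.map_mul_left γ⟩
  simpa [Sym2.map_map, Function.comp_def] using h.map_mul_left γ⁻¹

lemma IsSymmGen.nonempty [Nontrivial Γ] (hS : IsSymmGen S) : S.Nonempty := by
  by_contra hempty
  rw [Finset.not_nonempty_iff_eq_empty] at hempty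
  obtain ⟨g, hg⟩ := exists_ne (1 : Γ)
  obtain ⟨l, hl, rfl⟩ := hS.2.2 g
  obtain rfl : l = [] :=
    List.eq_nil_iff_forall_not_mem.2 fun x hx => by simpa [hempty] using hl x hx
  exact hg rfl

end Cayley

section Connectivity

variable {Γ : Type*}

lemma measurable_isChain (l : List Γ) :
    Measurable fun ω : Config Γ => l.IsChain fun a b => ω s(a, b) = true := by
  induction l with
  | nil => simp
  | cons a l ih =>
    cases l with
    | nil => simp
    | cons b l =>
      simp only [List.isChain_cons_cons]
      exact (measurableSet_setOfPred.1 <|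
        measurableSet_eq_fun (measurable_pi_apply _) measurable_const).and ih

lemma measurableSet_conn [Countable Γ] (u v : Γ) :
    MeasurableSet {ω : Config Γ | Conn ω u v} :=
  measurableSet_setOfPred.2 <| .exists fun _ => .exists fun l =>
    measurable_const.and ((measurable_isChain (u :: l)).and measurable_const)

end Connectivity

section WallPercolation

variable {Γ X : Type*} [Group Γ] (S : Finset Γ) (act : Γ →* Equiv.Perm X) (𝓗 : Set (Set X))
  (x₀ : X)

def edgeWalls (e : Sym2 Γ) : Set (Set X) :=
  Sym2.lift ⟨fun a b => sepWalls 𝓗 (act a x₀) (act b x₀), fun _ _ => sepWalls_comm _ _⟩ e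

open Classical in
/-- `ξ B = true` means that the wall `B` is activated; an edge is open iff it is an edge of the
Cayley graph that crosses no activated wall. -/
noncomputable def wallConfig (ξ : Set X → Bool) : Config Γ :=
  fun e => decide (IsCayleyEdge S e ∧ ∀ B ∈ edgeWalls act 𝓗 x₀ e, ξ B = false)

noncomputable def wallPerc (ν : Measure Bool) : Measure (Config Γ) :=
  (Measure.infinitePi fun _ : Set X => ν).map (wallConfig S act 𝓗 x₀)

variable {S act 𝓗 x₀}

lemma wallConfig_eq_true {ξ : Set X → Bool} {e : Sym2 Γ} :
    wallConfig S act 𝓗 x₀ ξ e = true ↔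
      IsCayleyEdge S e ∧ ∀ B ∈ edgeWalls act 𝓗 x₀ e, ξ B = false := by
  simp [wallConfig]

lemma edgeWalls_finite (hfin : ∀ x y : X, (sepWalls 𝓗 x y).Finite)
    (e : Sym2 Γ) : (edgeWalls act 𝓗 x₀ e).Finite :=
  Sym2.ind (fun _ _ => hfin _ _) e

lemma measurable_wallConfig (hfin : ∀ x y : X, (sepWalls 𝓗 x y).Finite) :
    Measurable (wallConfig S act 𝓗 x₀) := by
  refine measurable_pi_lambda _ fun e => measurable_to_bool ?_
  have : (fun ξ => wallConfig S act 𝓗 x₀ ξ e) ⁻¹' {true} =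
      {_ξ | IsCayleyEdge S e} ∩ ⋂ B ∈ edgeWalls act 𝓗 x₀ e, {ξ | ξ B = false} := by
    ext ξ
    simp [wallConfig_eq_true]
  rw [this]
  exact .inter (.const _) <| (edgeWalls_finite hfin e).measurableSet_biInter fun B _ =>
    measurableSet_eq_fun (measurable_pi_apply B) measurable_const

lemma edgeWalls_map_mul_left (hinv : ∀ γ : Γ, ∀ B ∈ 𝓗, act γ '' B ∈ 𝓗) (γ : Γ) (e : Sym2 Γ) :
    edgeWalls act 𝓗 x₀ (e.map (γ * ·)) = Equiv.Set.congr (act γ) '' edgeWalls act 𝓗 x₀ e := by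
  induction e using Sym2.ind with
  | h a b =>
    simp only [Sym2.map_mk, edgeWalls, Sym2.lift_mk, map_mul, Equiv.Perm.coe_mul,
      Function.comp_apply]
    exact sepWalls_act act hinv γ _ _

lemma shift_wallConfig (hinv : ∀ γ : Γ, ∀ B ∈ 𝓗, act γ '' B ∈ 𝓗) (γ : Γ) (ξ : Set X → Bool) :
    shift γ (wallConfig S act 𝓗 x₀ ξ) =
      wallConfig S act 𝓗 x₀ (ξ ∘ Equiv.Set.congr (act γ⁻¹)) := by
  ext e
  rw [shift, Bool.eq_iff_iff, wallConfig_eq_true, wallConfig_eq_true,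
    isCayleyEdge_map_mul_left_iff, edgeWalls_map_mul_left hinv, Set.forall_mem_image]
  rfl

lemma isInvBondPerc_wallPerc (hinv : ∀ γ : Γ, ∀ B ∈ 𝓗, act γ '' B ∈ 𝓗)
    (hfin : ∀ x y : X, (sepWalls 𝓗 x y).Finite)
    (ν : Measure Bool) [IsProbabilityMeasure ν] :
    IsInvBondPerc S (wallPerc S act 𝓗 x₀ ν) := by
  have hF := measurable_wallConfig (S := S) (act := act) (x₀ := x₀) hfin
  have hP : IsProbabilityMeasure (wallPerc S act 𝓗 x₀ ν) :=
    Measure.isProbabilityMeasure_map hF.aemeasurable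
  refine ⟨hP, ?_, fun γ => ?_⟩
  · have hsupp : wallConfig S act 𝓗 x₀ ⁻¹' {ω | ∀ e, ω e = true → IsCayleyEdge S e} = univ :=
      eq_univ_of_forall fun ξ _ he => (wallConfig_eq_true.1 he).1
    refine le_antisymm prob_le_one ?_
    calc (1 : ℝ≥0∞) = _ := by rw [hsupp, measure_univ]
      _ ≤ _ := Measure.le_map_apply hF.aemeasurable _
  · have hshift : Measurable (shift (Γ := Γ) γ) := by unfold shift; fun_prop
    have hcomp : Measurable fun ξ : Set X → Bool => ξ ∘ Equiv.Set.congr (act γ⁻¹) := by fun_prop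
    have hconj : shift γ ∘ wallConfig S act 𝓗 x₀ =
        wallConfig S act 𝓗 x₀ ∘ fun ξ => ξ ∘ Equiv.Set.congr (act γ⁻¹) :=
      funext (shift_wallConfig hinv γ)
    rw [wallPerc, Measure.map_map hshift hF, hconj, ← Measure.map_map hF hcomp,
      Measure.infinitePi_map_comp_equiv]

lemma wallPerc_edge_open (hfin : ∀ x y : X, (sepWalls 𝓗 x y).Finite) (ν : Measure Bool)
    [IsProbabilityMeasure ν] {e : Sym2 Γ} (he : IsCayleyEdge S e) :
    wallPerc S act 𝓗 x₀ ν {ω | ω e = true} = ν {false} ^ (edgeWalls act 𝓗 x₀ e).ncard := by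
  have hpre : wallConfig S act 𝓗 x₀ ⁻¹' {ω | ω e = true} =
      {ξ | ∀ B ∈ edgeWalls act 𝓗 x₀ e, ξ B = false} := by
    ext ξ
    simp [wallConfig_eq_true, he]
  rw [wallPerc, Measure.map_apply (measurable_wallConfig hfin)
    (measurableSet_eq_fun (measurable_pi_apply e) measurable_const), hpre,
    Measure.infinitePi_setOf_forall_mem_eq ν (edgeWalls_finite hfin e)]

lemma eq_false_of_conn_wallConfig {ξ : Set X → Bool} {u v : Γ}
    (h : Conn (wallConfig S act 𝓗 x₀ ξ) u v) :
    ∀ B ∈ sepWalls 𝓗 (act u x₀) (act v x₀), ξ B = false := by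
  obtain ⟨-, l, -, hchain, hlast⟩ := h
  have hpath := List.relationReflTransGen_of_exists_isChain_cons l hchain hlast
  intro B hB
  by_contra hξ
  have hstep : ∀ a b, wallConfig S act 𝓗 x₀ ξ s(a, b) = true → (act a x₀ ∈ B ↔ act b x₀ ∈ B) :=
    fun a b hab => mem_iff_mem_of_notMem_sepWalls hB.1 fun hsep =>
      hξ ((wallConfig_eq_true.1 hab).2 B hsep)
  have hside : (act u x₀ ∈ B) = (act v x₀ ∈ B) :=
    hpath.eq_of_forall_rel (f := (act · x₀ ∈ B)) fun a b hab => propext (hstep a b hab)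
  have hxor := hB.2
  rw [hside, _root_.xor_self] at hxor
  exact hxor

lemma tpf_wallPerc_le [Countable Γ] (hfin : ∀ x y : X, (sepWalls 𝓗 x y).Finite)
    (ν : Measure Bool) [IsProbabilityMeasure ν] (u v : Γ) :
    tpf (wallPerc S act 𝓗 x₀ ν) u v ≤
      (ν {false}).toReal ^ (sepWalls 𝓗 (act u x₀) (act v x₀)).ncard := by
  rw [tpf, wallPerc, Measure.map_apply (measurable_wallConfig hfin) (measurableSet_conn u v),
    ← ENNReal.toReal_pow, ← Measure.infinitePi_setOf_forall_mem_eq ν (hfin _ _)]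
  exact ENNReal.toReal_mono (measure_ne_top _ _)
    (measure_mono fun _ hξ => eq_false_of_conn_wallConfig hξ)

end WallPercolation

lemma tpfVanishes_of_le_pow {Γ : Type*} [Group Γ] {S : Finset Γ} {P : Measure (Config Γ)}
    {q : ℝ} (hq0 : 0 ≤ q) (hq1 : q < 1) {φ : Γ → ℕ} (hφ : ∀ N, {γ | φ γ ≤ N}.Finite)
    (hP : ∀ g h, tpf P g h ≤ q ^ φ (g⁻¹ * h)) : TpfVanishes S P := by
  intro ε hε
  obtain ⟨N, hN⟩ := exists_pow_lt_of_lt_one hε hq1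
  refine ⟨(hφ N).toFinset.sup (wlen S), fun g h hgh => ?_⟩
  have hfar : N < φ (g⁻¹ * h) := by
    by_contra! hle
    exact hgh.not_ge (Finset.le_sup ((hφ N).mem_toFinset.2 hle))
  calc tpf P g h ≤ q ^ φ (g⁻¹ * h) := hP g h
    _ ≤ q ^ N := pow_le_pow_of_le_one hq0 hq1.le hfar.le
    _ < ε := hN

lemma expDeg_wallPerc {Γ X : Type*} [Group Γ] {S : Finset Γ} {act : Γ →* Equiv.Perm X}
    {𝓗 : Set (Set X)} {x₀ : X} (hfin : ∀ x y : X, (sepWalls 𝓗 x y).Finite) (ν : Measure Bool)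
    [IsProbabilityMeasure ν] :
    expDeg S (wallPerc S act 𝓗 x₀ ν) =
      ∑ t ∈ S, (ν {false}).toReal ^ (sepWalls 𝓗 x₀ (act t x₀)).ncard := by
  refine Finset.sum_congr rfl fun t ht => ?_
  have he : IsCayleyEdge S s(1, t) := ⟨1, t, ht, by rw [one_mul]⟩
  rw [wallPerc_edge_open hfin ν he, ENNReal.toReal_pow]
  simp [edgeWalls]

/-- If `Γ` acts properly on a space with walls (walls encoded by a
`Γ`-invariant family `𝓗` of subsets of `X`, with `w(x,y)` the number of members of `𝓗`
separating `x` and `y`), then for every `α < 1` there is a `Γ`-invariant bond percolation on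
its Cayley graph with `E[deg_ω(o)] > α·deg(o)` whose two-point function vanishes at
infinity. -/
theorem walls_action_implies_percolation {Γ : Type*} [Group Γ] [Countable Γ] [Infinite Γ]
    (S : Finset Γ) (hS : IsSymmGen S)
    (X : Type*) (act : Γ →* Equiv.Perm X) (𝓗 : Set (Set X))
    (hinv : ∀ (γ : Γ), ∀ B ∈ 𝓗, (act γ) '' B ∈ 𝓗)
    (hfin : ∀ x y : X, {B ∈ 𝓗 | Xor' (x ∈ B) (y ∈ B)}.Finite)
    (x₀ : X)
    (hproper : ∀ N : ℕ,
      {γ : Γ | ({B ∈ 𝓗 | Xor' (x₀ ∈ B) (act γ x₀ ∈ B)}).ncard ≤ N}.Finite) :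
    ∀ α : ℝ, α < 1 → ∃ P : Measure (Config Γ),
      IsInvBondPerc S P ∧ expDeg S P > α * (S.card : ℝ) ∧ TpfVanishes S P := by
  intro α hα
  set w : Γ → ℕ := fun γ => (sepWalls 𝓗 x₀ (act γ x₀)).ncard
  obtain ⟨p, hp0, hp1, hαp⟩ := exists_pos_lt_one_lt_pow hα (S.sup w)
  set ν : Measure Bool := bernoulliMeasure false true ⟨p, hp0.le, hp1.le⟩
  have hν : (ν {false}).toReal = p := by
    simp [ν, bernoulliMeasure_apply_of_mem_of_notMem]
  refine ⟨wallPerc S act 𝓗 x₀ ν, isInvBondPerc_wallPerc hinv hfin ν, ?_, ?_⟩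
  · rw [expDeg_wallPerc hfin, hν]
    calc α * S.card = ∑ _t ∈ S, α := by simp [mul_comm]
      _ < ∑ t ∈ S, p ^ w t := Finset.sum_lt_sum_of_nonempty hS.nonempty fun t ht =>
        hαp.trans_le (pow_le_pow_of_le_one hp0.le hp1.le (Finset.le_sup ht))
  · refine tpfVanishes_of_le_pow (φ := w) hp0.le hp1 hproper fun g h => ?_
    calc tpf _ g h ≤ (ν {false}).toReal ^ (sepWalls 𝓗 (act g x₀) (act h x₀)).ncard :=
          tpf_wallPerc_le hfin ν g h
      _ = p ^ w (g⁻¹ * h) := by rw [hν, ncard_sepWalls_act act hinv]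

end InvPerc
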